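/- arXiv:2008.10260 — 3 statements merged into one kernel-verified Lean document; each statement's English description precedes it below -/
import Mathlib

section
/- Let X = (κ, E) be a graph on a regular uncountable cardinal κ and λ < κ an infinite cardinal such that every subgraph of X of size < κ has coloring number ≤ λ. If the set T = {α < κ : there exists β ≥ α with |E^β ∩ α| ≥ λ} is non-stationary in κ, then col(X) ≤ λ. -/
open Cardinal

/-- A good coloring of a graph: adjacent vertices get distinct colors. -/
def IsGoodColoring {V : Type} {C : Type} (G : SimpleGraph V) (f : V → C) : Prop :=
  ∀ ⦃x y : V⦄, G.Adj x y → f x ≠ f y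

/-- `G` is `κ`-list-colorable: every assignment of lists of size `κ`
admits a good coloring choosing from the lists. -/
def ListColorable {V : Type} (G : SimpleGraph V) (κ : Cardinal) : Prop :=
  ∀ (C : Type) (F : V → Set C), (∀ x, #(F x) = κ) →
    ∃ f : V → C, IsGoodColoring G f ∧ ∀ x, f x ∈ F x

/-- The list-chromatic number of `G`: the least cardinal `κ` such that every
`κ`-assignment admits a good coloring from the lists. -/
noncomputable def listChromatic {V : Type} (G : SimpleGraph V) : Cardinal :=
  sInf {κ : Cardinal | ListColorable G κ}

/-- The coloring number of `G`: the least cardinal `κ` such that there is a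
well-ordering of the vertices in which every vertex has fewer than `κ`
neighbors preceding it. -/
noncomputable def colNum {V : Type} (G : SimpleGraph V) : Cardinal :=
  sInf {κ : Cardinal | ∃ r : V → V → Prop, IsWellOrder V r ∧
    ∀ x : V, #{y : V | G.Adj x y ∧ r y x} < κ}

/-- A club (closed unbounded) subset of a (well-)ordered type. -/
def IsClubSet {V : Type*} [LinearOrder V] (C : Set V) : Prop :=
  (∀ a : V, ∃ b ∈ C, a < b) ∧
  ∀ a : V, (∃ b, b < a) → (∀ b < a, ∃ c ∈ C, b < c ∧ c < a) → a ∈ C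

/-- A stationary subset: one meeting every club subset. -/
def IsStatSet {V : Type*} [LinearOrder V] (S : Set V) : Prop :=
  ∀ C : Set V, IsClubSet C → (S ∩ C).Nonempty

/-- The cofinality of the initial segment below `a`: the least cardinality of a
subset of `Set.Iio a` which is cofinal below `a`. -/
noncomputable def segCof {V : Type} [LinearOrder V] (a : V) : Cardinal :=
  sInf {c : Cardinal | ∃ s : Set V, s ⊆ Set.Iio a ∧ (∀ b < a, ∃ x ∈ s, b ≤ x) ∧ #s = c}

/-- The diamond principle `◇(S)` on a well-ordered type. -/
def HasDiamond {V : Type} [LinearOrder V] (S : Set V) : Prop :=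
  ∃ d : V → Set V, (∀ a ∈ S, d a ⊆ Set.Iio a) ∧
    ∀ A : Set V, IsStatSet {a | a ∈ S ∧ d a = A ∩ Set.Iio a}

/-!
Take a club `C` disjoint from `T` and cut the vertices into the blocks between consecutive
points of `C`, i.e. the fibres of `x ↦ sup (C ∩ [0, x])`. Each block is bounded in `κ`, hence
has a well-ordering in which every vertex has fewer than `λ` earlier neighbours; concatenate
these well-orderings along `κ`. A vertex `x` in the block starting at `c ∈ C` then has fewer
than `λ` neighbours in earlier blocks, since these lie below `c`, and `c ∉ T` while `x ≥ c`.
-/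

theorem colNum_le_iff {V : Type} (G : SimpleGraph V) {lam : Cardinal} :
    colNum G ≤ lam ↔
      ∃ r : V → V → Prop, IsWellOrder V r ∧ ∀ x : V, #{y : V | G.Adj x y ∧ r y x} < lam := by
  refine ⟨fun h => ?_, fun ⟨r, hr, hlt⟩ => csInf_le' ⟨r, hr, hlt⟩⟩
  have hne : {μ : Cardinal | ∃ r : V → V → Prop, IsWellOrder V r ∧
      ∀ x : V, #{y : V | G.Adj x y ∧ r y x} < μ}.Nonempty :=
    ⟨Order.succ #V, WellOrderingRel, WellOrderingRel.isWellOrder,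
      fun _ => (mk_set_le _).trans_lt (Order.lt_succ _)⟩
  obtain ⟨r, hr, hlt⟩ := csInf_mem hne
  exact ⟨r, hr, fun x => (hlt x).trans_le h⟩

section LexFibers

variable {V I : Type} (b : V → I)
  (r : ∀ i, {x | b x = i} → {x | b x = i} → Prop) [∀ i, IsWellOrder _ (r i)]

theorem typein_fiber_eq {y : V} {i : I} (h : b y = i) :
    Ordinal.typein (r i) ⟨y, h⟩ = Ordinal.typein (r (b y)) ⟨y, rfl⟩ := by
  subst h; rfl

variable [LinearOrder I] [WellFoundedLT I]

theorem exists_wellOrder_lex_fibers :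
    ∃ R : V → V → Prop, IsWellOrder V R ∧
      ∀ x y, R y x → b y < b x ∨ ∃ h : b y = b x, r (b x) ⟨y, h⟩ ⟨x, rfl⟩ := by
  let f : V → I ×ₗ Ordinal := fun x => toLex (b x, Ordinal.typein (r (b x)) ⟨x, rfl⟩)
  have hf : Function.Injective f := by
    intro x y hxy
    obtain ⟨hb, hrank⟩ := Prod.ext_iff.1 (toLex.injective hxy)
    rw [← typein_fiber_eq b r hb.symm] at hrank
    exact congrArg Subtype.val (Ordinal.typein_injective _ hrank)
  refine ⟨f ⁻¹'o (· < ·), (RelEmbedding.preimage ⟨f, hf⟩ _).isWellOrder, fun x y hyx => ?_⟩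
  rcases Prod.Lex.toLex_lt_toLex.1 hyx with hb | ⟨hb, hrank⟩
  · exact Or.inl hb
  · refine Or.inr ⟨hb, (Ordinal.typein_lt_typein _).1 ?_⟩
    rwa [typein_fiber_eq b r hb]

end LexFibers

theorem colNum_le_of_fibers {V I : Type} [LinearOrder I] [WellFoundedLT I] (G : SimpleGraph V)
    (b : V → I) {lam : Cardinal} (hlam : ℵ₀ ≤ lam)
    (hfiber : ∀ i, colNum (G.induce {x | b x = i}) ≤ lam)
    (hback : ∀ x, #{y | G.Adj x y ∧ b y < b x} < lam) :
    colNum G ≤ lam := by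
  choose r hr hlt using fun i => (colNum_le_iff (G.induce {x | b x = i})).1 (hfiber i)
  obtain ⟨R, hR, hRlex⟩ := exists_wellOrder_lex_fibers b r
  refine (colNum_le_iff G).2 ⟨R, hR, fun x => ?_⟩
  have hsub : {y | G.Adj x y ∧ R y x} ⊆ {y | G.Adj x y ∧ b y < b x} ∪
      Subtype.val '' {z | (G.induce {x' | b x' = b x}).Adj ⟨x, rfl⟩ z ∧ r (b x) z ⟨x, rfl⟩} := by
    rintro y ⟨hxy, hyx⟩
    rcases hRlex x y hyx with hb | ⟨hb, hr⟩
    · exact Or.inl ⟨hxy, hb⟩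
    · exact Or.inr ⟨⟨y, hb⟩, ⟨hxy, hr⟩, rfl⟩
  calc #{y | G.Adj x y ∧ R y x}
      ≤ #{y | G.Adj x y ∧ b y < b x} + #{z | (G.induce {x' | b x' = b x}).Adj ⟨x, rfl⟩ z ∧
          r (b x) z ⟨x, rfl⟩} :=
        (mk_le_mk_of_subset hsub).trans ((mk_union_le _ _).trans (add_le_add_right mk_image_le _))
    _ < lam := add_lt_of_lt hlam (hback x) (hlt (b x) ⟨x, rfl⟩)

theorem IsClubSet.mem_of_isLUB {V : Type*} [LinearOrder V] {C s : Set V} {a : V}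
    (hC : IsClubSet C) (hs : s ⊆ C) (hne : s.Nonempty) (ha : IsLUB s a) : a ∈ C := by
  by_contra haC
  have hlt : ∀ c ∈ s, c < a := fun c hc => (ha.1 hc).lt_of_ne (ne_of_mem_of_not_mem (hs hc) haC)
  refine haC (hC.2 a ?_ fun b hb => ?_)
  · obtain ⟨c, hc⟩ := hne
    exact ⟨c, hlt c hc⟩
  · obtain ⟨c, hcs, hbc⟩ := (lt_isLUB_iff ha).1 hb
    exact ⟨c, hs hcs, hbc, hlt c hcs⟩

section FloorIn

variable {V : Type*} [LinearOrder V] [WellFoundedLT V] (C : Set V)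

/-- The least upper bound of `C ∩ Iic x`; when that set is empty, the least element of `V`. -/
noncomputable def floorIn (x : V) : V :=
  wellFounded_lt.min (upperBounds (C ∩ Set.Iic x)) ⟨x, fun _ hc => hc.2⟩

theorem isLUB_floorIn (x : V) : IsLUB (C ∩ Set.Iic x) (floorIn C x) :=
  ⟨wellFounded_lt.min_mem _ _, fun _ hz => not_lt.1 (wellFounded_lt.not_lt_min _ hz)⟩

theorem floorIn_le (x : V) : floorIn C x ≤ x :=
  (isLUB_floorIn C x).2 fun _ hc => hc.2

theorem floorIn_le_floorIn {x y : V} (h : floorIn C x ≤ y) : floorIn C x ≤ floorIn C y :=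
  (isLUB_floorIn C x).2 fun _ hc => (isLUB_floorIn C y).1 ⟨hc.1, ((isLUB_floorIn C x).1 hc).trans h⟩

theorem lt_of_floorIn_lt_floorIn {x y : V} (h : floorIn C y < floorIn C x) : y < floorIn C x := by
  contrapose! h
  exact floorIn_le_floorIn C h

theorem lt_of_floorIn_lt_of_mem {y c : V} (hc : c ∈ C) (h : floorIn C y < c) : y < c := by
  contrapose! h
  exact (isLUB_floorIn C y).1 ⟨hc, h⟩

theorem floorIn_le_of_inter_Iic_eq_empty {x : V} (h : C ∩ Set.Iic x = ∅) (y : V) :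
    floorIn C x ≤ y :=
  (isLUB_floorIn C x).2 (by simp [h])

theorem floorIn_mem {x : V} (hC : IsClubSet C) (h : (C ∩ Set.Iic x).Nonempty) : floorIn C x ∈ C :=
  hC.mem_of_isLUB Set.inter_subset_left h (isLUB_floorIn C x)

end FloorIn

theorem mk_adj_lt_floorIn_lt {V : Type} [LinearOrder V] [WellFoundedLT V] (G : SimpleGraph V)
    {C : Set V} (hC : IsClubSet C) {lam : Cardinal} (hlam : lam ≠ 0)
    (hCthin : ∀ c ∈ C, ∀ b, c ≤ b → #{y | G.Adj b y ∧ y < c} < lam) (x : V) :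
    #{y | G.Adj x y ∧ y < floorIn C x} < lam := by
  rcases (C ∩ Set.Iic x).eq_empty_or_nonempty with hempty | hne
  · have : {y | G.Adj x y ∧ y < floorIn C x} = ∅ := by
      simp [not_lt.2 (floorIn_le_of_inter_Iic_eq_empty C hempty _)]
    simpa [this, pos_iff_ne_zero] using hlam
  · exact hCthin _ (floorIn_mem C hC hne) x (floorIn_le C x)

theorem colNum_le_of_not_stationary_general {V : Type} [LinearOrder V] [WellFoundedLT V]
    (κ lam : Cardinal) (hseg : ∀ a : V, #{b : V | b < a} < κ)
    (hlam : ℵ₀ ≤ lam)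
    (G : SimpleGraph V)
    (hsmall : ∀ H : G.Subgraph, #H.verts < κ → colNum H.coe ≤ lam)
    (hT : ¬ IsStatSet {a : V | ∃ b : V, a ≤ b ∧ lam ≤ #{c : V | G.Adj b c ∧ c < a}}) :
    colNum G ≤ lam := by
  obtain ⟨C, hC, hCthin⟩ : ∃ C, IsClubSet C ∧
      ∀ c ∈ C, ∀ b, c ≤ b → #{y | G.Adj b y ∧ y < c} < lam := by
    simpa [IsStatSet, Set.Nonempty, imp_not_comm] using hT
  refine colNum_le_of_fibers G (floorIn C) hlam (fun i => ?_) (fun x => ?_)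
  · obtain ⟨c, hc, hic⟩ := hC.1 i
    rw [SimpleGraph.induce_eq_coe_induce_top]
    refine hsmall _ ((mk_le_mk_of_subset fun y (hy : floorIn C y = i) => ?_).trans_lt (hseg c))
    exact lt_of_floorIn_lt_of_mem C hc (hy ▸ hic)
  · refine lt_of_le_of_lt (mk_le_mk_of_subset ?_)
      (mk_adj_lt_floorIn_lt G hC (aleph0_pos.trans_le hlam).ne' hCthin x)
    exact fun y hy => ⟨hy.1, lt_of_floorIn_lt_floorIn C hy.2⟩

/-- Let `X` be a graph on a regular uncountable cardinal `κ` (vertices: a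
well-ordered type of order type `κ`), `λ < κ` infinite, with every subgraph of
size `< κ` of coloring number `≤ λ`.  If `T = {α : ∃ β ≥ α, |E^β ∩ α| ≥ λ}` is
non-stationary, then `col(X) ≤ λ`. -/
theorem colNum_le_of_not_stationary {V : Type} [LinearOrder V] [WellFoundedLT V]
    (κ lam : Cardinal) (hreg : κ.IsRegular) (hunc : ℵ₀ < κ)
    (hcard : #V = κ) (hseg : ∀ a : V, #{b : V | b < a} < κ)
    (hlam : ℵ₀ ≤ lam) (hlamκ : lam < κ)
    (G : SimpleGraph V)
    (hsmall : ∀ H : G.Subgraph, #H.verts < κ → colNum H.coe ≤ lam)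
    (hT : ¬ IsStatSet {a : V | ∃ b : V, a ≤ b ∧ lam ≤ #{c : V | G.Adj b c ∧ c < a}}) :
    colNum G ≤ lam :=
  colNum_le_of_not_stationary_general κ lam hseg hlam G hsmall hT
end

section
/- Let κ be a regular uncountable cardinal and S ⊆ κ ∩ Cof(ω) a non-reflecting stationary set. Then there is a graph X of size κ such that col(X) > ω but every subgraph of X of size < κ has coloring number ≤ ω. (The graph: vertices S ∪ ⋃{c_α : α ∈ S}, where c_α ⊆ α is cofinal of order type ω with c_α ∩ S = ∅, and β is adjacent to α iff α ∈ S and β ∈ c_α.) -/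
open Cardinal

/-!
The graph joins every `α ∈ S` to the points of a ladder `L α`, an `ω`-sequence cofinal in `α`.

If some well-ordering gave every vertex only finitely many earlier neighbours, every `α ∈ S`
would have a ladder point coming after it; this is a regressive function on `S` with finite
fibres, which a closure-point argument (a weak form of Fodor's lemma) rules out.

A set of fewer than `κ` vertices lies below some `a`, and `Iio a` is well-ordered by induction
on `a`. Non-reflection (or, when `cf a ≤ ω`, a ladder or a top element) yields a cofinal `C ⊆ a`
accumulating at no point of `S`. Order `Iio a` block by block, according to the least point of
`C` above each vertex: the neighbours of `x` in earlier blocks lie on the ladder of `x` below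
the last point of `C` under `x`, so there are only finitely many of them.
-/

open Set

universe u

namespace SimpleGraph

variable {V : Type u} {G : SimpleGraph V} {s t : Set V}

variable (G) in
/-- An injective ordinal key `k` well-orders `s` so that every vertex has only finitely many
earlier neighbours: the coloring number of `G` on `s` is at most `ℵ₀`. -/
def HasFinBackOrderOn (s : Set V) : Prop :=
  ∃ k : V → Ordinal.{u}, InjOn k s ∧ ∀ x ∈ s, {y | y ∈ s ∧ G.Adj x y ∧ k y < k x}.Finite

theorem HasFinBackOrderOn.of_key {T : Type*} [LinearOrder T] [WellFoundedLT T] (k : V → T)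
    (hk : InjOn k s) (hfin : ∀ x ∈ s, {y | y ∈ s ∧ G.Adj x y ∧ k y < k x}.Finite) :
    G.HasFinBackOrderOn s := by
  classical
  let r : s → s → Prop := fun x y => k x < k y
  have : IsWellOrder s r := hk.injective.isWellOrder (· < ·)
  let k' : V → Ordinal.{u} := fun x => if hx : x ∈ s then Ordinal.typein r ⟨x, hx⟩ else 0
  have hk' : ∀ x (hx : x ∈ s), k' x = Ordinal.typein r ⟨x, hx⟩ := fun x hx => dif_pos hx
  refine ⟨k', fun x hx y hy hxy => ?_, fun x hx => (hfin x hx).subset ?_⟩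
  · rw [hk' x hx, hk' y hy] at hxy
    exact congrArg Subtype.val (Ordinal.typein_injective r hxy)
  · rintro y ⟨hy, hadj, hlt⟩
    rw [hk' x hx, hk' y hy, Ordinal.typein_lt_typein] at hlt
    exact ⟨hy, hadj, hlt⟩

theorem HasFinBackOrderOn.mono (h : G.HasFinBackOrderOn s) (hts : t ⊆ s) :
    G.HasFinBackOrderOn t := by
  obtain ⟨k, hinj, hfin⟩ := h
  exact ⟨k, hinj.mono hts, fun x hx => (hfin x (hts hx)).subset fun y ⟨hy, hxy⟩ => ⟨hts hy, hxy⟩⟩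

theorem hasFinBackOrderOn_of_subsingleton (hs : s.Subsingleton) : G.HasFinBackOrderOn s :=
  ⟨fun _ => 0, fun _ hx _ hy _ => hs hx hy, fun _ _ => by simp⟩

theorem HasFinBackOrderOn.of_blocks {T : Type*} [LinearOrder T] [WellFoundedLT T] (p : V → T)
    (hblock : ∀ i, G.HasFinBackOrderOn {x | x ∈ s ∧ p x = i})
    (hcross : ∀ x ∈ s, {y | y ∈ s ∧ G.Adj x y ∧ p y < p x}.Finite) :
    G.HasFinBackOrderOn s := by
  choose K hKinj hKfin using hblock
  refine .of_key (fun x => toLex (p x, K (p x) x)) (fun x hx y hy hxy => ?_) fun x hx => ?_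
  · obtain ⟨hp, hK⟩ := Prod.mk.inj (toLex.injective hxy)
    exact hKinj (p x) ⟨hx, rfl⟩ ⟨hy, hp.symm⟩ (hK.trans (by rw [hp]))
  · refine ((hcross x hx).union (hKfin (p x) x ⟨hx, rfl⟩)).subset ?_
    rintro y ⟨hy, hadj, hlt⟩
    rcases Prod.Lex.lt_iff.1 hlt with hp | ⟨hp, hK⟩
    · exact Or.inl ⟨hy, hadj, hp⟩
    · simp only [ofLex_toLex] at hp hK
      rw [hp] at hK
      exact Or.inr ⟨⟨hy, hp⟩, hadj, hK⟩

theorem HasFinBackOrderOn.insert (h : G.HasFinBackOrderOn s) (a : V) :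
    G.HasFinBackOrderOn (insert a s) := by
  classical
  refine .of_blocks (fun x => decide (x ≠ a)) (fun i => ?_) fun x _ => ?_
  · cases i
    · exact hasFinBackOrderOn_of_subsingleton
        (subsingleton_singleton.anti fun x hx => by simpa using hx.2)
    · exact h.mono fun x ⟨hx, hxa⟩ => hx.resolve_left (by simpa using hxa)
  · refine (finite_singleton a).subset fun y ⟨_, _, hy⟩ => ?_
    by_contra hya
    simp only [ne_eq, mem_singleton_iff.not.1 hya, not_false_eq_true, decide_true] at hy
    exact (Bool.le_true _).not_gt hy

end SimpleGraph

theorem SimpleGraph.HasFinBackOrderOn.colNum_coe_le_aleph0 {V : Type} {G : SimpleGraph V}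
    {s : Set V} (h : G.HasFinBackOrderOn s) (H : G.Subgraph) (hH : H.verts ⊆ s) :
    colNum H.coe ≤ ℵ₀ := by
  obtain ⟨k, hinj, hfin⟩ := h
  refine csInf_le' ⟨fun x y => k x < k y, (hinj.mono hH).injective.isWellOrder (· < ·),
    fun x => Set.Finite.lt_aleph0 ?_⟩
  refine ((hfin x (hH x.2)).preimage Subtype.val_injective.injOn).subset ?_
  rintro y ⟨hadj, hlt⟩
  exact ⟨hH y.2, H.adj_sub hadj, hlt⟩

theorem exists_isWellOrder_mk_lt_colNum {V : Type} (G : SimpleGraph V) :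
    ∃ r : V → V → Prop, IsWellOrder V r ∧ ∀ x, #{y | G.Adj x y ∧ r y x} < colNum G :=
  csInf_mem (⟨Order.succ #V, WellOrderingRel, inferInstance,
    fun _ => (mk_set_le _).trans_lt (Order.lt_succ _)⟩ :
    {κ : Cardinal | ∃ r : V → V → Prop, IsWellOrder V r ∧
      ∀ x : V, #{y : V | G.Adj x y ∧ r y x} < κ}.Nonempty)

/-- `V` is ordered like (the initial ordinal of) the regular cardinal `κ`. -/
structure IsRegularOrderType (V : Type u) [LinearOrder V] (κ : Cardinal.{u}) : Prop where
  isRegular : κ.IsRegular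
  mk_eq : #V = κ
  mk_Iio_lt : ∀ a : V, #(Iio a) < κ

namespace IsRegularOrderType

variable {V : Type u} [LinearOrder V] {κ : Cardinal.{u}}

theorem mk_Iic_lt (hV : IsRegularOrderType V κ) (a : V) : #(Iic a) < κ := by
  rw [← Iio_insert]
  exact mk_insert_le.trans_lt (add_lt_of_lt hV.isRegular.aleph0_le (hV.mk_Iio_lt a)
    (one_lt_aleph0.trans_le hV.isRegular.aleph0_le))

theorem exists_forall_lt_of_mk_lt (hV : IsRegularOrderType V κ) {B : Set V} (hB : #B < κ) :
    ∃ z, ∀ b ∈ B, b < z := by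
  by_contra! h
  have hcover : (univ : Set V) ⊆ ⋃ b : B, Iic (b : V) := fun x _ =>
    let ⟨b, hb, hxb⟩ := h x
    mem_iUnion.2 ⟨⟨b, hb⟩, hxb⟩
  have hV_le := (mk_le_mk_of_subset hcover).trans mk_iUnion_le_sum_mk
  rw [mk_univ, hV.mk_eq] at hV_le
  exact hV_le.not_gt (sum_lt_of_isRegular hV.isRegular hB fun b => hV.mk_Iic_lt b)

theorem isClubSet_setOf_forall_lt [WellFoundedLT V] (hV : IsRegularOrderType V κ)
    (hκ : ℵ₀ < κ) (f : V → V) : IsClubSet {x | ∀ b < x, f b < x} := by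
  refine ⟨fun x₀ => ?_, fun x _ hx b hb => ?_⟩
  · have hstep : ∀ w, ∃ z, ∀ b ∈ insert w (f '' Iic w), b < z := fun w =>
      hV.exists_forall_lt_of_mk_lt <| mk_insert_le.trans_lt <| add_lt_of_lt
        hV.isRegular.aleph0_le (mk_image_le.trans_lt (hV.mk_Iic_lt w)) (one_lt_aleph0.trans hκ)
    choose step hstep using hstep
    let y : ℕ → V := fun n => step^[n] x₀
    have hy : ∀ n, y (n + 1) = step (y n) := fun n => Function.iterate_succ_apply' step n x₀
    obtain ⟨z, hz⟩ := hV.exists_forall_lt_of_mk_lt (B := range y)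
      ((countable_range y).le_aleph0.trans_lt hκ)
    obtain ⟨m, hm, hmin⟩ := wellFounded_lt.has_min (upperBounds (range y))
      ⟨z, forall_mem_range.2 fun n => (hz _ ⟨n, rfl⟩).le⟩
    refine ⟨m, fun b hb => ?_, (hstep x₀ x₀ (mem_insert _ _)).trans_le (hm ⟨1, rfl⟩)⟩
    obtain ⟨n, hbn⟩ : ∃ n, b < y n := by
      by_contra! h
      exact hmin b (forall_mem_range.2 h) hb
    calc f b < y (n + 1) := by
          rw [hy]; exact hstep _ _ (mem_insert_of_mem _ (mem_image_of_mem f hbn.le))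
      _ ≤ m := hm ⟨n + 1, rfl⟩
  · obtain ⟨c, hc, hbc, hcx⟩ := hx b hb
    exact (hc b hbc).trans hcx

end IsRegularOrderType

theorem IsStatSet.exists_le_mk_fiber {V : Type u} [LinearOrder V] [WellFoundedLT V]
    {κ : Cardinal.{u}} {S : Set V} (hS : IsStatSet S) (hV : IsRegularOrderType V κ)
    (hκ : ℵ₀ < κ) {g : V → V} (hg : ∀ a ∈ S, g a < a) : ∃ b, κ ≤ #{x | x ∈ S ∧ g x = b} := by
  by_contra! hsmall
  choose m hm using fun b => hV.exists_forall_lt_of_mk_lt (hsmall b)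
  obtain ⟨a, haS, ha⟩ := hS _ (hV.isClubSet_setOf_forall_lt hκ m)
  exact (hm (g a) a ⟨haS, rfl⟩).asymm (ha (g a) (hg a haS))

theorem IsRegularOrderType.aleph0_lt_colNum {V : Type} [LinearOrder V] [WellFoundedLT V]
    {κ : Cardinal} (hV : IsRegularOrderType V κ) (hκ : ℵ₀ < κ) {G : SimpleGraph V}
    {S : Set V} (hS : IsStatSet S) (hinf : ∀ a ∈ S, {y | G.Adj a y ∧ y < a}.Infinite) :
    ℵ₀ < colNum G := by
  by_contra! hle
  obtain ⟨r, hr, hback⟩ := exists_isWellOrder_mk_lt_colNum G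
  have hfin : ∀ x, {y | G.Adj x y ∧ r y x}.Finite := fun x =>
    lt_aleph0_iff_set_finite.1 ((hback x).trans_le hle)
  have hpick : ∀ a ∈ S, ∃ y, y < a ∧ G.Adj y a ∧ r a y := fun a ha => by
    obtain ⟨y, ⟨hadj, hya⟩, hy⟩ := ((hinf a ha).sdiff (hfin a)).nonempty
    refine ⟨y, hya, hadj.symm, (trichotomous_of r a y).resolve_right ?_⟩
    rintro (rfl | hry)
    exacts [hya.false, hy ⟨hadj, hry⟩]
  choose! g hg using hpick
  obtain ⟨b, hb⟩ := hS.exists_le_mk_fiber hV hκ fun a ha => (hg a ha).1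
  refine hb.not_gt ((Set.Finite.lt_aleph0 ((hfin b).subset ?_)).trans hκ)
  rintro x ⟨hx, rfl⟩
  exact (hg x hx).2

theorem segCof_eq_cof_Iio {V : Type} [LinearOrder V] (a : V) : segCof a = Order.cof (Iio a) := by
  apply le_antisymm
  · obtain ⟨t, ht, hcard⟩ := Order.exists_cof_eq (Iio a)
    refine csInf_le' ⟨(↑) '' t, by rintro _ ⟨c, -, rfl⟩; exact c.2, fun b hb => ?_, ?_⟩
    · obtain ⟨c, hc, hbc⟩ := ht ⟨b, hb⟩
      exact ⟨c, mem_image_of_mem _ hc, hbc⟩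
    · rw [mk_image_eq Subtype.val_injective, hcard]
  · refine le_csInf ⟨_, Iio a, subset_rfl, fun b hb => ⟨b, hb, le_rfl⟩, rfl⟩ ?_
    rintro _ ⟨s, hsa, hs, rfl⟩
    refine (Order.cof_le (s := (↑) ⁻¹' s) fun b => ?_).trans_eq ?_
    · obtain ⟨x, hx, hbx⟩ := hs b b.2
      exact ⟨⟨x, hsa hx⟩, hx, hbx⟩
    · exact mk_preimage_of_injective_of_subset_range _ _ Subtype.val_injective
        fun x hx => ⟨⟨x, hsa hx⟩, rfl⟩

section Ladder

variable {V : Type u} [LinearOrder V] {S : Set V} {a : V} {ℓ : ℕ → V} {L : V → ℕ → V}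

structure IsLadder (a : V) (ℓ : ℕ → V) : Prop where
  strictMono : StrictMono ℓ
  lt : ∀ n, ℓ n < a
  exists_le : ∀ b < a, ∃ n, b ≤ ℓ n

theorem IsLadder.finite_setOf_le (h : IsLadder a ℓ) {b : V} (hb : b < a) :
    {n | ℓ n ≤ b}.Finite := by
  obtain ⟨N, hN⟩ := h.exists_le b hb
  exact (finite_Iic N).subset fun n hn => h.strictMono.le_iff_le.1 (le_trans hn hN)

theorem exists_isLadder [WellFoundedLT V] (h : Order.cof (Iio a) = ℵ₀) : ∃ ℓ, IsLadder a ℓ := by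
  obtain ⟨s, hs, htype⟩ := Ordinal.exists_ord_cof_eq (Iio a)
  obtain ⟨e⟩ : Nonempty (((· < ·) : s → s → Prop) ≃r ((· < ·) : ℕ → ℕ → Prop)) :=
    Ordinal.lift_type_eq.{u, 0, 0}.1 (by simp [htype, h])
  let f : ℕ ≃o s := OrderIso.ofRelIsoLT e.symm
  refine ⟨fun n => (f n : Iio a), fun m n hmn => f.strictMono hmn, fun n => (f n : Iio a).2,
    fun b hb => ?_⟩
  obtain ⟨c, hc, hbc⟩ := hs ⟨b, hb⟩
  exact ⟨f.symm ⟨c, hc⟩, by simpa using Subtype.coe_le_coe.2 hbc⟩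

def ladderGraph (S : Set V) (L : V → ℕ → V) : SimpleGraph V :=
  SimpleGraph.fromRel fun x y => y ∈ S ∧ x ∈ range (L y)

theorem mem_of_ladderGraph_adj_of_lt (hL : ∀ a ∈ S, ∀ n, L a n < a) {x y : V}
    (h : (ladderGraph S L).Adj x y) (hyx : y < x) : x ∈ S ∧ y ∈ range (L x) := by
  rcases h with ⟨-, ⟨hy, n, rfl⟩ | hx⟩
  · exact absurd (hL y hy n) (not_lt.2 hyx.le)
  · exact hx

theorem infinite_setOf_ladderGraph_adj_lt (ha : a ∈ S) (hℓ : IsLadder a (L a)) :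
    {y | (ladderGraph S L).Adj a y ∧ y < a}.Infinite := by
  refine (infinite_range_of_injective hℓ.strictMono.injective).mono ?_
  rintro _ ⟨n, rfl⟩
  exact ⟨⟨(hℓ.lt n).ne', Or.inr ⟨ha, n, rfl⟩⟩, hℓ.lt n⟩

/-- `C` cuts `Iio a` into blocks, according to the least point of `C` above each vertex, and
accumulates at no point of `S`. -/
structure IsSplitting (S : Set V) (a : V) (C : Set V) : Prop where
  subset_Iio : C ⊆ Iio a
  exists_ge : ∀ x < a, ∃ c ∈ C, x ≤ c
  exists_bound : ∀ x ∈ S, x < a → ∃ b < x, ∀ c ∈ C, c < x → c ≤ b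

theorem isSplitting_image_of_subsingleton {s : Set (Iio a)} (hs : IsCofinal s)
    (hsub : s.Subsingleton) (hS : ∀ x ∈ S, ∃ b, b < x) : IsSplitting S a ((↑) '' s) := by
  refine ⟨by rintro _ ⟨c, -, rfl⟩; exact c.2, fun x hx => ?_, fun x hxS hx => ?_⟩
  · obtain ⟨c, hc, hxc⟩ := hs ⟨x, hx⟩
    exact ⟨c, mem_image_of_mem _ hc, hxc⟩
  · obtain ⟨b, hb⟩ := hS x hxS
    refine ⟨b, hb, ?_⟩
    rintro _ ⟨c, hc, rfl⟩ hcx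
    obtain ⟨d, hd, hxd⟩ := hs ⟨x, hx⟩
    exact absurd (hsub hc hd ▸ hxd) (not_le.2 hcx)

theorem IsLadder.isSplitting_range (hℓ : IsLadder a ℓ) (hS : ∀ x ∈ S, ∃ b, b < x) :
    IsSplitting S a (range ℓ) := by
  refine ⟨range_subset_iff.2 hℓ.lt, fun x hx => ?_, fun x hxS hx => ?_⟩
  · obtain ⟨n, hn⟩ := hℓ.exists_le x hx
    exact ⟨_, mem_range_self n, hn⟩
  · obtain ⟨b₀, hb₀⟩ := hS x hxS
    have hfin : (insert b₀ (ℓ '' {n | ℓ n < x})).Finite :=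
      (((hℓ.finite_setOf_le hx).subset fun n hn => le_of_lt hn).image ℓ).insert b₀
    obtain ⟨b, hb, hmax⟩ := exists_max_image _ id hfin (insert_nonempty _ _)
    refine ⟨b, ?_, ?_⟩
    · rcases hb with rfl | ⟨n, hn, rfl⟩
      exacts [hb₀, hn]
    · rintro _ ⟨n, rfl⟩ hn
      exact hmax _ (mem_insert_of_mem _ ⟨n, hn, rfl⟩)

theorem isSplitting_image_of_isClubSet {C : Set (Iio a)} (hC : IsClubSet C)
    (hCS : ∀ c ∈ C, (c : V) ∉ S) (hS : ∀ x ∈ S, ∃ b, b < x) : IsSplitting S a ((↑) '' C) := by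
  refine ⟨by rintro _ ⟨c, -, rfl⟩; exact c.2, fun x hx => ?_, fun x hxS hx => ?_⟩
  · obtain ⟨c, hc, hxc⟩ := hC.1 ⟨x, hx⟩
    exact ⟨c, mem_image_of_mem _ hc, hxc.le⟩
  · obtain ⟨b₀, hb₀⟩ := hS x hxS
    have hnot := mt (hC.2 ⟨x, hx⟩ ⟨⟨b₀, hb₀.trans hx⟩, hb₀⟩) fun h => hCS _ h hxS
    push Not at hnot
    obtain ⟨b, hbx, hb⟩ := hnot
    refine ⟨b, hbx, ?_⟩
    rintro _ ⟨c, hc, rfl⟩ hcx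
    exact not_lt.1 fun hbc => (hb c hc hbc).not_gt hcx

end Ladder

theorem exists_isSplitting {V : Type} [LinearOrder V] [WellFoundedLT V] {S : Set V}
    (hnonrefl : ∀ a : V, ℵ₀ < segCof a → ¬ IsStatSet {b : Set.Iio a | (b : V) ∈ S})
    (hS : ∀ x ∈ S, ∃ b, b < x) (a : V) : ∃ C, IsSplitting S a C := by
  rcases lt_or_ge (Order.cof (Iio a)) ℵ₀ with hfin | hinf
  · obtain ⟨s, hs, hcard⟩ := Order.exists_cof_eq (Iio a)
    exact ⟨_, isSplitting_image_of_subsingleton hs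
      (mk_le_one_iff_set_subsingleton.1 (hcard ▸ Order.cof_lt_aleph0_iff.1 hfin)) hS⟩
  rcases hinf.eq_or_lt with hω | hω
  · obtain ⟨ℓ, hℓ⟩ := exists_isLadder hω.symm
    exact ⟨_, hℓ.isSplitting_range hS⟩
  · obtain ⟨C, hC⟩ := not_forall.1 (hnonrefl a (by rwa [segCof_eq_cof_Iio]))
    obtain ⟨hC, hCS⟩ := Classical.not_imp.1 hC
    exact ⟨_, isSplitting_image_of_isClubSet hC (fun c hc hcS => hCS ⟨c, hcS, hc⟩) hS⟩

theorem IsSplitting.hasFinBackOrderOn_Iio {V : Type u} [LinearOrder V] [WellFoundedLT V]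
    {S C : Set V} {a : V} {L : V → ℕ → V} (hL : ∀ x ∈ S, IsLadder x (L x))
    (hC : IsSplitting S a C) (IH : ∀ c < a, (ladderGraph S L).HasFinBackOrderOn (Iio c)) :
    (ladderGraph S L).HasFinBackOrderOn (Iio a) := by
  choose! p hp hp_min using fun x (hx : x < a) => wellFounded_lt.has_min _ (hC.exists_ge x hx)
  refine .of_blocks p (fun c => ?_) fun x hx => ?_
  · by_cases hc : c < a
    · refine ((IH c hc).insert c).mono ?_
      rintro x ⟨hx, rfl⟩
      rw [Iio_insert]
      exact (hp x hx).2
    · refine (SimpleGraph.hasFinBackOrderOn_of_subsingleton subsingleton_empty).mono ?_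
      rintro x ⟨hx, rfl⟩
      exact hc (hC.subset_Iio (hp x hx).1)
  have hcross : ∀ y ∈ Iio a, (ladderGraph S L).Adj x y → p y < p x →
      p y < x ∧ x ∈ S ∧ y ∈ range (L x) := by
    intro y hy hadj hpy
    have hpyx : p y < x := not_le.1 fun h => hp_min x hx _ ⟨(hp y hy).1, h⟩ hpy
    exact ⟨hpyx, mem_of_ladderGraph_adj_of_lt (fun z hz => (hL z hz).lt) hadj
      ((hp y hy).2.trans_lt hpyx)⟩
  by_cases hxS : x ∈ S
  · obtain ⟨b, hbx, hb⟩ := hC.exists_bound x hxS hx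
    refine (((hL x hxS).finite_setOf_le hbx).image (L x)).subset ?_
    rintro y ⟨hy, hadj, hpy⟩
    obtain ⟨hpyx, -, n, rfl⟩ := hcross y hy hadj hpy
    exact ⟨n, (hp _ hy).2.trans (hb _ (hp _ hy).1 hpyx), rfl⟩
  · exact finite_empty.subset fun y ⟨hy, hadj, hpy⟩ => hxS (hcross y hy hadj hpy).2.1

theorem hasFinBackOrderOn_ladderGraph_Iio {V : Type} [LinearOrder V] [WellFoundedLT V]
    {S : Set V}
    (hnonrefl : ∀ a : V, ℵ₀ < segCof a → ¬ IsStatSet {b : Set.Iio a | (b : V) ∈ S})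
    {L : V → ℕ → V} (hL : ∀ x ∈ S, IsLadder x (L x)) (a : V) :
    (ladderGraph S L).HasFinBackOrderOn (Iio a) := by
  induction a using WellFoundedLT.induction with
  | _ a IH =>
    obtain ⟨C, hC⟩ := exists_isSplitting hnonrefl (fun x hx => ⟨L x 0, (hL x hx).lt 0⟩) a
    exact hC.hasFinBackOrderOn_Iio hL IH

/-- If `κ` is regular uncountable and `S ⊆ κ ∩ Cof(ω)` is a non-reflecting
stationary set, then there is a graph of size `κ` with uncountable coloring
number all of whose subgraphs of size `< κ` have countable coloring number. -/
theorem exists_graph_of_nonreflecting {V : Type} [LinearOrder V] [WellFoundedLT V]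
    (κ : Cardinal) (hreg : κ.IsRegular) (hunc : ℵ₀ < κ)
    (hcard : #V = κ) (hseg : ∀ a : V, #{b : V | b < a} < κ)
    (S : Set V) (hScof : ∀ a ∈ S, segCof a = ℵ₀)
    (hstat : IsStatSet S)
    (hnonrefl : ∀ a : V, ℵ₀ < segCof a →
      ¬ IsStatSet {b : Set.Iio a | (b : V) ∈ S}) :
    ∃ (W : Type) (G : SimpleGraph W), #W = κ ∧ ℵ₀ < colNum G ∧
      ∀ H : G.Subgraph, #H.verts < κ → colNum H.coe ≤ ℵ₀ := by
  have hV : IsRegularOrderType V κ := ⟨hreg, hcard, hseg⟩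
  choose! L hL using fun a ha => exists_isLadder ((segCof_eq_cof_Iio a).symm.trans (hScof a ha))
  refine ⟨V, ladderGraph S L, hcard, hV.aleph0_lt_colNum hunc hstat fun a ha =>
    infinite_setOf_ladderGraph_adj_lt ha (hL a ha), fun H hH => ?_⟩
  obtain ⟨z, hz⟩ := hV.exists_forall_lt_of_mk_lt hH
  exact (hasFinBackOrderOn_ladderGraph_Iio hnonrefl hL z).colNum_coe_le_aleph0 H hz
end

section
/- Let κ be a singular cardinal of countable cofinality and λ < κ an infinite cardinal with μ^λ < κ for every μ < κ. Then for every graph X of size κ, if every subgraph of X of size < κ has list-chromatic number ≤ λ, then List(X) ≤ λ. -/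
/-!
Write `V` as a countable union of sets of size `< κ` (possible as `cf κ = ω`) and grow these into
an increasing chain `∅ = X₀ ⊆ X₁ ⊆ ⋯` of sets of size `< κ` such that every vertex outside `Xₙ`
has fewer than `λ` neighbours in `Xₙ`. Given `λ`-lists, color the layers `Xₙ₊₁ \ Xₙ` one after
another: a vertex of a layer loses fewer than `λ` colors to its earlier neighbours, and the layer,
being small, is colorable from what remains of the lists.

The sets `Xₙ` replace the paper's elementary submodels. They exist because, by lemma (i), a set `Y`
of size `λ` has at most `2 ^ λ` outside vertices with `λ` neighbours in `Y`; closing a set of size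
`ν < κ` under `Y ↦` these vertices along `λ⁺` stages keeps its size `≤ (ν + 2 ^ λ) ^ λ < κ`.
-/

open Cardinal

open Set

universe u

theorem Cardinal.mk_diff_eq_of_lt {α : Type*} {A U : Set α} {lam : Cardinal} (hlam : ℵ₀ ≤ lam)
    (hA : #A = lam) (hU : #U < lam) : #(A \ U : Set α) = lam := by
  refine eq_of_add_eq_of_aleph0_le ?_
    ((mk_le_mk_of_subset (inter_subset_right (s := A))).trans_lt hU) hlam
  rw [add_comm, ← hA, ← mk_sdiff_add_mk (inter_subset_left (s := A) (t := U)), sdiff_self_inter]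

theorem Cardinal.mk_iUnion_le_of_le {α ι : Type u} {f : ι → Set α} {μ : Cardinal} (hμ : ℵ₀ ≤ μ)
    (hι : #ι ≤ μ) (hf : ∀ i, #(f i) ≤ μ) : #(⋃ i, f i) ≤ μ :=
  (mk_iUnion_le f).trans ((mul_le_mul' hι (ciSup_le' hf)).trans (mul_eq_self hμ).le)

/-- Close `S` under `Q` along `λ⁺` stages: since `λ⁺` is regular, every `λ`-subset of the union
already lies below some stage. -/
theorem exists_superset_closed_under {α : Type*} {lam μ : Cardinal} (hlam : ℵ₀ ≤ lam)
    (hlamμ : lam < μ) (hμ : μ ^ lam = μ) (Q : Set α → Set α)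
    (hQ : ∀ Y : Set α, #Y = lam → #(Q Y) ≤ μ) {S : Set α} (hS : #S ≤ μ) :
    ∃ X, S ⊆ X ∧ #X ≤ μ ∧ ∀ Y ⊆ X, #Y = lam → Q Y ⊆ X := by
  have hμ₀ : ℵ₀ ≤ μ := hlam.trans hlamμ.le
  let F : Ordinal → Set α := wellFounded_lt.fix fun i F =>
    S ∪ ⋃ Y : {Y : Set α // Y ⊆ ⋃ (j) (h : j < i), F j h ∧ #Y = lam}, Q Y
  have hF : ∀ i, F i = S ∪ ⋃ Y : {Y : Set α // Y ⊆ ⋃ j < i, F j ∧ #Y = lam}, Q Y :=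
    wellFounded_lt.fix_eq _
  set o := (Order.succ lam).ord
  have hFμ : ∀ i < o, #(F i) ≤ μ := by
    intro i
    induction i using WellFoundedLT.induction with
    | ind i ih =>
      intro hi
      have hlt : #(⋃ j < i, F j) ≤ μ := mk_biUnion_le_of_le
        (Order.lt_succ_iff.1 (lt_ord.1 hi) |>.trans hlamμ.le) hμ₀ F
        fun j hj => ih j hj (hj.trans hi)
      have hsub : #{Y : Set α // Y ⊆ ⋃ j < i, F j ∧ #Y = lam} ≤ μ :=
        calc _ ≤ #{Y : Set α // Y ⊆ ⋃ j < i, F j ∧ #Y ≤ lam} :=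
              mk_subtype_mono fun Y hY => ⟨hY.1, hY.2.le⟩
          _ ≤ max #(⋃ j < i, F j : Set α) ℵ₀ ^ lam := mk_bounded_subset_le _ _
          _ ≤ μ := hμ ▸ power_le_power_right (max_le hlt hμ₀)
      rw [hF i]
      exact (mk_union_le _ _).trans ((add_le_add hS (mk_iUnion_le_of_le hμ₀ hsub
        fun Y => hQ Y Y.2.2)).trans (add_eq_self hμ₀).le)
  refine ⟨⋃ i < o, F i, ?_, ?_, fun Y hYX hY => ?_⟩
  · exact (hF 0 ▸ subset_union_left).trans
      (subset_biUnion_of_mem (u := F) (ord_pos.2 (zero_le.trans_lt (Order.lt_succ lam))))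
  · exact mk_biUnion_le_of_le ((card_ord _).trans_le (Order.succ_le_of_lt hlamμ)) hμ₀ F hFμ
  · choose ind hind hYind using fun y : Y => mem_iUnion₂.1 (hYX y.2)
    have hio : ⨆ y, ind y + 1 < o := Ordinal.iSup_add_one_lt_of_lt_cof
      (by rw [(isRegular_succ hlam).cof_ord, hY]; exact Order.lt_succ lam) hind
    refine subset_trans ?_ (subset_biUnion_of_mem (u := F) hio)
    rw [hF]
    refine fun x hx => Or.inr (mem_iUnion.2 ⟨⟨Y, fun y hy => ?_, hY⟩, hx⟩)
    exact mem_iUnion₂.2 ⟨ind ⟨y, hy⟩, (Order.lt_add_one_iff.2 le_rfl).trans_le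
      (Ordinal.le_iSup (fun y => ind y + 1) ⟨y, hy⟩), hYind ⟨y, hy⟩⟩

theorem exists_iUnion_eq_univ_mk_lt {α : Type*} {κ : Cardinal} (hcof : κ.ord.cof = ℵ₀)
    (hα : #α = κ) : ∃ B : ℕ → Set α, (∀ n, #(B n) < κ) ∧ ⋃ n, B n = Set.univ := by
  have hκ : ℵ₀ ≤ κ := hcof ▸ (Ordinal.cof_le_card _).trans_eq (card_ord κ)
  obtain ⟨e⟩ : Nonempty (α ≃ κ.ord.ToType) := Cardinal.eq.1 (by rw [hα, mk_toType, card_ord])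
  obtain ⟨s, hs, hscard⟩ := Order.exists_cof_eq κ.ord.ToType
  obtain ⟨_⟩ : Nonempty (Denumerable s) :=
    denumerable_iff.2 (by rw [hscard, Ordinal.cof_toType, hcof])
  let t : ℕ ≃ s := (Denumerable.eqv s).symm
  refine ⟨fun n => e ⁻¹' Iic (t n), fun n => ?_, eq_univ_of_forall fun a => ?_⟩
  · rw [mk_preimage_equiv, ← Iio_insert]
    exact mk_insert_le.trans_lt (add_lt_of_lt hκ (by simpa using mk_Iio_lt (t n).1)
      (one_lt_aleph0.trans_le hκ))
  · obtain ⟨b, hb, hab⟩ := hs (e a)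
    exact mem_iUnion.2 ⟨t.symm ⟨b, hb⟩, by simpa using hab⟩

theorem exists_filtration {α : Type*} {κ : Cardinal} (hκ : ℵ₀ ≤ κ) {P : Set α → Prop}
    (hP₀ : P ∅) (hP : ∀ S : Set α, #S < κ → ∃ X : Set α, S ⊆ X ∧ #X < κ ∧ P X) {B : ℕ → Set α}
    (hB : ∀ n, #(B n) < κ) (hBcover : ⋃ n, B n = Set.univ) :
    ∃ X : ℕ → Set α, X 0 = ∅ ∧ Monotone X ∧ (∀ a, ∃ n, a ∈ X n) ∧ ∀ n, #(X n) < κ ∧ P (X n) := by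
  choose cl hcl using hP
  have hunion : ∀ n (S : Set α), #S < κ → #(S ∪ B n : Set α) < κ := fun n S hS =>
    (mk_union_le _ _).trans_lt (add_lt_of_lt hκ hS (hB n))
  let X : ℕ → {S : Set α // #S < κ ∧ P S} := fun n => Nat.rec
    ⟨∅, by simpa using aleph0_pos.trans_le hκ, hP₀⟩
    (fun n S => ⟨cl _ (hunion n S.1 S.2.1), (hcl _ _).2⟩) n
  have hstep : ∀ n, (X n).1 ∪ B n ⊆ (X (n + 1)).1 := fun n => (hcl _ _).1
  refine ⟨fun n => (X n).1, rfl, monotone_nat_of_le_succ fun n => subset_union_left.trans (hstep n),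
    fun a => ?_, fun n => (X n).2⟩
  obtain ⟨n, hn⟩ := mem_iUnion.1 (hBcover ▸ mem_univ a)
  exact ⟨n + 1, hstep n (Or.inr hn)⟩

section ListColoring

variable {V : Type} {G : SimpleGraph V} {lam : Cardinal}

theorem ListColorable.mono {κ κ' : Cardinal} (h : ListColorable G κ) (hle : κ ≤ κ') :
    ListColorable G κ' := by
  intro C F hF
  choose F' hF'F hF' using fun x => le_mk_iff_exists_subset.1 ((hF x).symm ▸ hle)
  obtain ⟨f, hf, hfF'⟩ := h C F' hF'
  exact ⟨f, hf, fun x => hF'F x (hfF' x)⟩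

theorem listColorable_of_mk_lt {κ : Cardinal} (h : #V < κ) : ListColorable G κ := by
  intro C F hF
  have wf : WellFounded (WellOrderingRel (α := V)) := WellOrderingRel.isWellOrder.wf
  have fresh : ∀ x (p : ∀ y, WellOrderingRel y x → C), ∃ c ∈ F x, ∀ y hy, p y hy ≠ c := by
    intro x p
    have hsmall : #(range fun y : {y // WellOrderingRel y x} => p y y.2) < #(F x) :=
      calc _ ≤ #{y // WellOrderingRel y x} := mk_range_le
        _ ≤ #V := mk_subtype_le _
        _ < #(F x) := (hF x).symm ▸ h
    obtain ⟨c, hcF, hc⟩ := not_subset.1 fun hsub => (mk_le_mk_of_subset hsub).not_gt hsmall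
    exact ⟨c, hcF, fun y hy hyc => hc ⟨⟨y, hy⟩, hyc⟩⟩
  let f : V → C := wf.fix fun x p => (fresh x p).choose
  have hf : ∀ x, f x ∈ F x ∧ ∀ y, WellOrderingRel y x → f y ≠ f x := fun x => by
    rw [show f x = _ from wf.fix_eq _ x]
    exact (fresh x fun y _ => f y).choose_spec
  refine ⟨f, fun x y hxy hfxy => ?_, fun x => (hf x).1⟩
  rcases trichotomous_of WellOrderingRel x y with hlt | rfl | hgt
  · exact (hf y).2 x hlt hfxy
  · exact hxy.ne rfl
  · exact (hf x).2 y hgt hfxy.symm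

theorem listColorable_of_listChromatic_le (h : listChromatic G ≤ lam) : ListColorable G lam :=
  (csInf_mem (⟨_, listColorable_of_mk_lt (Order.lt_succ #V)⟩ :
    {κ | ListColorable G κ}.Nonempty)).mono h

def IsListColoringOn (G : SimpleGraph V) {C : Type} (F : V → Set C) (A : Set V) (f : V → C) :
    Prop :=
  (∀ x ∈ A, f x ∈ F x) ∧ ∀ x ∈ A, ∀ y ∈ A, G.Adj x y → f x ≠ f y

/-- A vertex of `D` loses fewer than `lam` colors of its list to its neighbours in `A`, so the
remaining lists still have size `lam`. -/
theorem IsListColoringOn.exists_extend (hlam : ℵ₀ ≤ lam) {C : Type} {F : V → Set C}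
    {A D : Set V} {f : V → C} (hf : IsListColoringOn G F A f) (hAD : Disjoint A D)
    (hF : ∀ x ∈ D, #(F x) = lam) (hD : ListColorable ((⊤ : G.Subgraph).induce D).coe lam)
    (hfew : ∀ x ∈ D, #(A ∩ G.neighborSet x : Set V) < lam) :
    ∃ f' : V → C, IsListColoringOn G F (A ∪ D) f' ∧ EqOn f' f A := by
  classical
  let used : V → Set C := fun x => f '' (A ∩ G.neighborSet x)
  obtain ⟨c, hc, hcF⟩ := hD C (fun v => F v.1 \ used v.1)
    fun v => mk_diff_eq_of_lt hlam (hF v v.2) (mk_image_le.trans_lt (hfew v v.2))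
  let f' : V → C := fun v => if hv : v ∈ D then c ⟨v, hv⟩ else f v
  have hf'A : EqOn f' f A := fun x hx => dif_neg (hAD.notMem_of_mem_left hx)
  have hf'D : ∀ x (hx : x ∈ D), f' x = c ⟨x, hx⟩ := fun x hx => dif_pos hx
  have hDA : ∀ x ∈ D, ∀ y ∈ A, G.Adj x y → f' x ≠ f' y := fun x hx y hy hxy => by
    rw [hf'D x hx, hf'A hy]
    exact fun hfxy => (hcF ⟨x, hx⟩).2 ⟨y, ⟨hy, hxy⟩, hfxy.symm⟩
  refine ⟨f', ⟨fun x hx => ?_, fun x hx y hy hxy => ?_⟩, hf'A⟩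
  · rcases hx with hx | hx
    · exact hf'A hx ▸ hf.1 x hx
    · exact hf'D x hx ▸ (hcF ⟨x, hx⟩).1
  · rcases hx with hx | hx <;> rcases hy with hy | hy
    · rw [hf'A hx, hf'A hy]
      exact hf.2 x hx y hy hxy
    · exact (hDA y hy x hx hxy.symm).symm
    · exact hDA x hx y hy hxy
    · rw [hf'D x hx, hf'D y hy]
      exact hc (show x ∈ D ∧ y ∈ D ∧ G.Adj x y from ⟨hx, hy, hxy⟩)

/-- Lemma (ii) of the paper. -/
theorem listColorable_of_filtration (hlam : ℵ₀ ≤ lam) {X : ℕ → Set V} (hX0 : X 0 = ∅)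
    (hmono : Monotone X) (hcover : ∀ v, ∃ n, v ∈ X n)
    (hcol : ∀ n, ListColorable ((⊤ : G.Subgraph).induce (X (n + 1) \ X n)).coe lam)
    (hclosed : ∀ n, ∀ x ∉ X n, #(X n ∩ G.neighborSet x : Set V) < lam) :
    ListColorable G lam := by
  intro C F hF
  have hne : ∀ v, (F v).Nonempty := fun v =>
    nonempty_coe_sort.1 (mk_ne_zero_iff.1 ((hF v).symm ▸ (aleph0_pos.trans_le hlam).ne'))
  choose f₀ hf₀ using hne
  have hstep : ∀ n (f : {f // IsListColoringOn G F (X n) f}),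
      ∃ f' : {f' // IsListColoringOn G F (X (n + 1)) f'}, EqOn f'.1 f.1 (X n) := by
    rintro n ⟨f, hf⟩
    obtain ⟨f', hf', hf'f⟩ := hf.exists_extend hlam disjoint_sdiff_right (fun x _ => hF x)
      (hcol n) fun x hx => hclosed n x hx.2
    rw [union_sdiff_cancel (hmono n.le_succ)] at hf'
    exact ⟨⟨f', hf'⟩, hf'f⟩
  choose next hnext using hstep
  let g : ∀ n, {f // IsListColoringOn G F (X n) f} := fun n =>
    Nat.rec ⟨f₀, by simp [IsListColoringOn, hX0]⟩ next n
  have hcoh : ∀ {m n}, m ≤ n → EqOn (g n).1 (g m).1 (X m) := by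
    intro m n hmn
    induction n, hmn using Nat.le_induction with
    | base => exact fun _ _ => rfl
    | succ n hmn ih => exact fun x hx => (hnext n (g n) (hmono hmn hx)).trans (ih hx)
  choose rank hrank using hcover
  refine ⟨fun v => (g (rank v)).1 v, fun x y hxy => ?_, fun x => (g (rank x)).2.1 x (hrank x)⟩
  have hx := le_max_left (rank x) (rank y)
  have hy := le_max_right (rank x) (rank y)
  show (g _).1 x ≠ (g _).1 y
  rw [← hcoh hx (hrank x), ← hcoh hy (hrank y)]
  exact (g _).2.2 x (hmono hx (hrank x)) y (hmono hy (hrank y)) hxy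

end ListColoring

section ManyNeighbors

variable {V : Type} {G : SimpleGraph V} {lam : Cardinal}

def manyNeighbors (G : SimpleGraph V) (lam : Cardinal) (Y : Set V) : Set V :=
  {z | z ∉ Y ∧ lam ≤ #(Y ∩ G.neighborSet z : Set V)}

/-- Lemma (i). Colors are pairs in `Y₀ × Y₀`: `y ∈ Y₀` gets the list `{y} × Y₀`, and the vertices
of `Y₁` code all maps `g : Y₀ → Y₀`, the one coding `g` getting the pairs `(y, g y)` for `λ` of its
neighbours `y`. A coloring of `Y₀` from these lists is some `g`, and then the vertex coding `g`
shares its color with a neighbour. -/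
theorem not_listColorable_of_subset_manyNeighbors {Y₀ Y₁ : Set V} (hY₀ : #Y₀ = lam)
    (hY₁ : lam ^ lam ≤ #Y₁) (hsub : Y₁ ⊆ manyNeighbors G lam Y₀) :
    ¬ ListColorable ((⊤ : G.Subgraph).induce (Y₀ ∪ Y₁)).coe lam := by
  classical
  subst hY₀
  intro hcol
  obtain ⟨φ⟩ : Nonempty ((Y₀ → Y₀) ↪ Y₁) := (le_def _ _).1 (by rwa [← power_def])
  have : Nonempty (Y₀ → Y₀) := ⟨id⟩
  let code : Y₁ → Y₀ → Y₀ := Function.invFun φ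
  have hN : ∀ z : Y₁, ∃ N : Set Y₀, N ⊆ {y | G.Adj z y} ∧ #N = #Y₀ := fun z =>
    le_mk_iff_exists_subset.1 ((hsub z.2).2.trans_eq (mk_sep Y₀ (G.Adj z)))
  choose N hNadj hNcard using hN
  let L : ((⊤ : G.Subgraph).induce (Y₀ ∪ Y₁)).verts → Set (Y₀ × Y₀) := fun v =>
    if hv : v.1 ∈ Y₀ then range (Prod.mk ⟨v.1, hv⟩)
    else (fun y => (y, code ⟨v.1, v.2.resolve_left hv⟩ y)) '' N ⟨v.1, v.2.resolve_left hv⟩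
  have hL : ∀ v, #(L v) = #Y₀ := fun v => by
    by_cases hv : v.1 ∈ Y₀
    · rw [show L v = _ from dif_pos hv, mk_range_eq _ (Prod.mk_right_injective _)]
    · rw [show L v = _ from dif_neg hv, mk_image_eq fun _ _ h => congrArg Prod.fst h, hNcard]
  obtain ⟨c, hc, hcL⟩ := hcol _ L hL
  let g : Y₀ → Y₀ := fun y => (c ⟨y, Or.inl y.2⟩).2
  have hcY₀ : ∀ y : Y₀, c ⟨y, Or.inl y.2⟩ = (y, g y) := fun y => by
    obtain ⟨b, hb⟩ : c ⟨y, Or.inl y.2⟩ ∈ range (Prod.mk y) := by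
      simpa [L, dif_pos y.2] using hcL ⟨y, Or.inl y.2⟩
    simp [g, ← hb]
  set z := φ g
  have hz : z.1 ∉ Y₀ := (hsub z.2).1
  obtain ⟨y, hyN, hyz⟩ : c ⟨z, Or.inr z.2⟩ ∈ (fun y => (y, code z y)) '' N z := by
    simpa [L, dif_neg hz] using hcL ⟨z, Or.inr z.2⟩
  rw [show code z = g from Function.leftInverse_invFun φ.injective g] at hyz
  exact @hc ⟨z, Or.inr z.2⟩ ⟨y, Or.inl y.2⟩ ⟨Or.inr z.2, Or.inl y.2, hNadj z hyN⟩
    (hyz.symm.trans (hcY₀ y).symm)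

theorem mk_manyNeighbors_le (hlam : ℵ₀ ≤ lam)
    (hcol : ∀ s : Set V, #s ≤ 2 ^ lam → ListColorable ((⊤ : G.Subgraph).induce s).coe lam)
    {Y : Set V} (hY : #Y = lam) : #(manyNeighbors G lam Y) ≤ 2 ^ lam := by
  by_contra! hbig
  obtain ⟨Y₁, hY₁, hY₁card⟩ := le_mk_iff_exists_subset.1 hbig.le
  refine not_listColorable_of_subset_manyNeighbors hY (hY₁card ▸ (power_self_eq hlam).le) hY₁
    (hcol _ ?_)
  calc #(Y ∪ Y₁ : Set V) ≤ #Y + #Y₁ := mk_union_le _ _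
    _ = 2 ^ lam := by rw [hY, hY₁card, add_eq_right (hlam.trans (cantor lam).le) (cantor lam).le]

theorem exists_superset_forall_mk_inter_neighborSet_lt (hlam : ℵ₀ ≤ lam)
    (hcol : ∀ s : Set V, #s ≤ 2 ^ lam → ListColorable ((⊤ : G.Subgraph).induce s).coe lam)
    (S : Set V) :
    ∃ X, S ⊆ X ∧ #X ≤ (#S + 2 ^ lam) ^ lam ∧ ∀ x ∉ X, #(X ∩ G.neighborSet x : Set V) < lam := by
  have hbase : #S + 2 ^ lam ≤ (#S + 2 ^ lam) ^ lam := self_le_power _ (one_le_aleph0.trans hlam)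
  have h2 : 2 ^ lam ≤ (#S + 2 ^ lam) ^ lam := le_add_self.trans hbase
  obtain ⟨X, hSX, hXμ, hX⟩ := exists_superset_closed_under hlam ((cantor lam).trans_le h2)
    (by rw [← power_mul, mul_eq_self hlam]) (manyNeighbors G lam)
    (fun Y hY => (mk_manyNeighbors_le hlam hcol hY).trans h2) (self_le_add_right _ _ |>.trans hbase)
  refine ⟨X, hSX, hXμ, fun x hx => lt_of_not_ge fun hle => hx ?_⟩
  obtain ⟨Y, hYsub, hY⟩ := le_mk_iff_exists_subset.1 hle
  refine hX Y (hYsub.trans inter_subset_left) hY ⟨fun hxY => hx (hYsub hxY).1, ?_⟩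
  rw [inter_eq_left.2 (hYsub.trans inter_subset_right), hY]

end ManyNeighbors

theorem singular_compactness_list_cof_omega_general {V : Type} (κ lam : Cardinal)
    (hcof : κ.ord.cof = ℵ₀)
    (hlam : ℵ₀ ≤ lam) (hlamκ : lam < κ)
    (hexp : ∀ μ < κ, μ ^ lam < κ)
    (G : SimpleGraph V) (hcard : #V = κ)
    (hsmall : ∀ H : G.Subgraph, #H.verts < κ → listChromatic H.coe ≤ lam) :
    listChromatic G ≤ lam := by
  have hκ : ℵ₀ ≤ κ := hcof ▸ (Ordinal.cof_le_card _).trans_eq (card_ord κ)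
  have hcol : ∀ s : Set V, #s < κ → ListColorable ((⊤ : G.Subgraph).induce s).coe lam :=
    fun s hs => listColorable_of_listChromatic_le (hsmall _ hs)
  have h2lam : 2 ^ lam < κ := power_self_eq hlam ▸ hexp lam hlamκ
  obtain ⟨B, hB, hBcover⟩ := exists_iUnion_eq_univ_mk_lt hcof hcard
  obtain ⟨X, hX0, hmono, hcover, hX⟩ := exists_filtration hκ
    (P := fun X => ∀ x ∉ X, #(X ∩ G.neighborSet x : Set V) < lam)
    (fun _ _ => by simpa using aleph0_pos.trans_le hlam)
    (fun (S : Set V) hS => by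
      obtain ⟨X, hSX, hXμ, hXclosed⟩ := exists_superset_forall_mk_inter_neighborSet_lt hlam
        (fun s hs => hcol s (hs.trans_lt h2lam)) S
      exact ⟨X, hSX, hXμ.trans_lt (hexp _ (add_lt_of_lt hκ hS h2lam)), hXclosed⟩)
    hB hBcover
  exact csInf_le' (listColorable_of_filtration hlam hX0 hmono hcover
    (fun n => hcol _ ((mk_le_mk_of_subset sdiff_subset).trans_lt (hX _).1)) fun n => (hX n).2)

/-- Singular compactness for the list-chromatic number under local cardinal
arithmetic: if `κ` is singular of countable cofinality, `λ < κ` is infinite,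
`μ^λ < κ` for all `μ < κ`, and every subgraph of `X` of size `< κ` has
list-chromatic number `≤ λ`, then `List(X) ≤ λ`. -/
theorem singular_compactness_list_cof_omega {V : Type} (κ lam : Cardinal)
    (hunc : ℵ₀ < κ) (hcof : κ.ord.cof = ℵ₀)
    (hlam : ℵ₀ ≤ lam) (hlamκ : lam < κ)
    (hexp : ∀ μ < κ, μ ^ lam < κ)
    (G : SimpleGraph V) (hcard : #V = κ)
    (hsmall : ∀ H : G.Subgraph, #H.verts < κ → listChromatic H.coe ≤ lam) :
    listChromatic G ≤ lam :=
  singular_compactness_list_cof_omega_general κ lam hcof hlam hlamκ hexp G hcard hsmall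
end
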